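/- The function q ↦ β_c(q)/q is strictly decreasing on [2, ∞) (with β_c(2) interpreted as the limit lim_{q→2⁺} β_c(q) = 4), where β_c(q) = 2(q-1)/(q-2) · log(q-1). Consequently, for all real q > r ≥ 2 one has r/q < β_c(r)/β_c(q). -/

import Mathlib

/-!
In the variable `t = log (q - 1)` one has `sinh t = q (q - 2) / (2 (q - 1))`, so for `q > 2`
`β_c(q)/q = t / sinh t`. Since `sinh` is strictly convex on `[0, ∞)` and vanishes at `0`, its
secant slope `sinh t / t` is strictly increasing, hence `t / sinh t` strictly decreases from its
limit `1`; the value `β_c(2)/2 = 2` lies above that limit.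
-/

/-- Mean-field Potts critical inverse temperature, extended continuously by `β_c(2) = 4`. -/
noncomputable def betac (q : ℝ) : ℝ :=
  if q = 2 then 4 else 2 * (q - 1) / (q - 2) * Real.log (q - 1)

open Real Set

lemma strictConvexOn_sinh : StrictConvexOn ℝ (Ici 0) sinh :=
  strictConvexOn_of_deriv2_pos (convex_Ici 0) continuous_sinh.continuousOn fun x hx => by
    rw [interior_Ici] at hx
    simpa [Real.deriv_sinh, Real.deriv_cosh] using hx

lemma sinh_div_self_lt_sinh_div_self {s t : ℝ} (hs : 0 < s) (hst : s < t) :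
    sinh s / s < sinh t / t := by
  simpa using strictConvexOn_sinh.secant_strict_mono (a := 0) self_mem_Ici hs.le
    (hs.trans hst).le hs.ne' (hs.trans hst).ne' hst

lemma strictAntiOn_self_div_sinh : StrictAntiOn (fun t => t / sinh t) (Ioi 0) := by
  intro s hs t ht hst
  have hs' : 0 < sinh s := sinh_pos_iff.mpr hs
  have ht' : 0 < sinh t := sinh_pos_iff.mpr ht
  have key := sinh_div_self_lt_sinh_div_self hs hst
  rw [div_lt_div_iff₀ hs ht] at key
  rw [div_lt_div_iff₀ ht' hs']
  linarith

lemma self_div_sinh_lt_one {t : ℝ} (ht : 0 < t) : t / sinh t < 1 :=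
  (div_lt_one (sinh_pos_iff.mpr ht)).mpr (self_lt_sinh_iff.mpr ht)

lemma betac_div_self_eq {q : ℝ} (hq : 2 < q) :
    betac q / q = log (q - 1) / sinh (log (q - 1)) := by
  have hq1 : q - 1 ≠ 0 := by linarith
  have hq2 : q - 2 ≠ 0 := by linarith
  have hsinh : ((q - 1) - (q - 1)⁻¹) / 2 = (q - 2) * q / (2 * (q - 1)) := by
    field_simp
    ring
  rw [betac, if_neg hq.ne', sinh_log (by linarith), hsinh]
  field_simp

lemma betac_pos {q : ℝ} (hq : 2 ≤ q) : 0 < betac q := by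
  rcases hq.eq_or_lt with rfl | hq
  · norm_num [betac]
  · rw [betac, if_neg hq.ne']
    have : 0 < log (q - 1) := log_pos (by linarith)
    have : 0 < q - 2 := by linarith
    have : 0 < q - 1 := by linarith
    positivity

/-- `q ↦ β_c(q)/q` is strictly decreasing on `[2, ∞)`; consequently
`r/q < β_c(r)/β_c(q)` for all real `q > r ≥ 2`. -/
theorem betac_div_self_strictAnti :
    StrictAntiOn (fun q : ℝ => betac q / q) (Set.Ici (2 : ℝ)) ∧
    ∀ q r : ℝ, 2 ≤ r → r < q → r / q < betac r / betac q := by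
  have hanti : StrictAntiOn (fun q : ℝ => betac q / q) (Ici 2) := by
    intro a ha b _ hab
    have hb : 2 < b := lt_of_le_of_lt ha hab
    have hlogb : 0 < log (b - 1) := log_pos (by linarith)
    show betac b / b < betac a / a
    rw [betac_div_self_eq hb]
    rcases (mem_Ici.mp ha).eq_or_lt with rfl | ha
    · calc log (b - 1) / sinh (log (b - 1)) < 1 := self_div_sinh_lt_one hlogb
        _ < betac 2 / 2 := by norm_num [betac]
    · rw [betac_div_self_eq ha]
      exact strictAntiOn_self_div_sinh (log_pos (by linarith : 1 < a - 1)) hlogb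
        (log_lt_log (by linarith) (by linarith))
  refine ⟨hanti, fun q r hr hrq => ?_⟩
  have hq : 2 ≤ q := hr.trans hrq.le
  have key := hanti hr hq hrq
  rw [div_lt_div_iff₀ (by linarith) (by linarith)] at key
  rw [div_lt_div_iff₀ (by linarith) (betac_pos hq)]
  linarith
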